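/- arXiv:2306.13217 — 6 statements merged into one kernel-verified Lean document; each statement's English description precedes it below -/
import Mathlib

section
/- Let H and V be finite-dimensional real inner product spaces, A : H → H a self-adjoint positive definite linear operator, and Θ : H → V a surjective linear map. Then Θ ∘ A⁻¹ ∘ Θᵀ : V → V is invertible, and its inverse equals (Θ†_A)ᵀ ∘ A ∘ Θ†_A, where Θ†_A is the pseudo-inverse of Θ relative to the inner product ⟨A·,·⟩ (i.e. Θ†_A(u) is the element of minimal A-norm with Θ(Θ†_A(u)) = u), and ᵀ denotes the adjoint with respect to the given inner products. -/
/-- For `A : H → H` self-adjoint positive definite and `Θ : H → V`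
surjective linear between finite-dimensional real inner ℝ product spaces,
`Θ ∘ A⁻¹ ∘ Θᵀ` is invertible with inverse `(Θ†_A)ᵀ ∘ A ∘ Θ†_A`, where `Θ†_A` is the
pseudo-inverse of `Θ` relative to the `A`-inner ℝ product. -/
theorem stmt5
    {H V : Type*} [NormedAddCommGroup H] [InnerProductSpace ℝ H]
    [FiniteDimensional ℝ H] [NormedAddCommGroup V] [InnerProductSpace ℝ V]
    [FiniteDimensional ℝ V]
    (A : H →ₗ[ℝ] H)
    (hAsa : LinearMap.adjoint A = A)
    (hApos : ∀ u : H, u ≠ 0 → (0 : ℝ) < inner ℝ (A u) u)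
    (Ainv : H →ₗ[ℝ] H)
    (hA1 : A ∘ₗ Ainv = LinearMap.id) (hA2 : Ainv ∘ₗ A = LinearMap.id)
    (Θ : H →ₗ[ℝ] V) (hΘ : Function.Surjective Θ)
    (Θd : V →ₗ[ℝ] H)
    (hRight : ∀ u : V, Θ (Θd u) = u)
    (hMin : ∀ (u : V) (v : H), Θ v = u →
      (inner ℝ (A (Θd u)) (Θd u) : ℝ) ≤ inner ℝ (A v) v) :
    (Θ ∘ₗ Ainv ∘ₗ LinearMap.adjoint Θ) ∘ₗ
        (LinearMap.adjoint Θd ∘ₗ A ∘ₗ Θd) = LinearMap.id ∧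
    (LinearMap.adjoint Θd ∘ₗ A ∘ₗ Θd) ∘ₗ
        (Θ ∘ₗ Ainv ∘ₗ LinearMap.adjoint Θ) = LinearMap.id := by
  -- self-adjointness in inner-product form
  have hsymm : ∀ x y : H, (inner ℝ (A x) y : ℝ) = inner ℝ x (A y) := by
    intro x y
    conv_lhs => rw [← hAsa]
    rw [LinearMap.adjoint_inner_left]
  -- orthogonality: A (Θd u) is orthogonal to ker Θ
  have horth : ∀ (u : V) (w : H), Θ w = 0 → (inner ℝ (A (Θd u)) w : ℝ) = 0 := by
    intro u w hw
    by_cases hw0 : w = 0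
    · simp [hw0]
    · set p := Θd u with hp
      set c : ℝ := inner ℝ (A p) w with hc
      set d : ℝ := inner ℝ (A w) w with hd
      have hdpos : 0 < d := hApos w hw0
      have hwp : (inner ℝ (A w) p : ℝ) = c := by
        rw [hc, hsymm w p, real_inner_comm]
      have hexp : ∀ t : ℝ,
          (inner ℝ (A p) p : ℝ) ≤ inner ℝ (A p) p + 2 * t * c + t ^ 2 * d := by
        intro t
        have h := hMin u (p + t • w) (by simp [hRight, hw, hp])
        have : (inner ℝ (A (p + t • w)) (p + t • w) : ℝ)
            = inner ℝ (A p) p + 2 * t * c + t ^ 2 * d := by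
          simp only [map_add, map_smul, inner_add_left, inner_add_right,
            real_inner_smul_left, real_inner_smul_right, hwp, ← hc, ← hd]
          ring
        linarith [this ▸ h]
      have ht := hexp (-c / d)
      have hne : d ≠ 0 := ne_of_gt hdpos
      have hval : 2 * (-c / d) * c + (-c / d) ^ 2 * d = -(c ^ 2) / d := by
        field_simp; ring
      have h4 : (0 : ℝ) ≤ -(c ^ 2) / d := by linarith [ht, hval]
      have h5 : -(c ^ 2) / d * d = -(c ^ 2) := div_mul_cancel₀ _ hne
      have h6 : c ^ 2 = 0 := by nlinarith [mul_nonneg h4 hdpos.le]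
      exact pow_eq_zero_iff (by norm_num) |>.mp h6
  -- key identity: Θdᵀ ∘ A = N ∘ Θ where N = Θdᵀ ∘ A ∘ Θd
  have hkey : LinearMap.adjoint Θd ∘ₗ A
      = (LinearMap.adjoint Θd ∘ₗ A ∘ₗ Θd) ∘ₗ Θ := by
    apply LinearMap.ext
    intro v
    apply ext_inner_right ℝ
    intro u
    simp only [LinearMap.comp_apply, LinearMap.adjoint_inner_left]
    have hker : Θ (v - Θd (Θ v)) = 0 := by simp [hRight]
    have h0 := horth u (v - Θd (Θ v)) hker
    have h1 : (inner ℝ (A v) (Θd u) : ℝ) = inner ℝ v (A (Θd u)) := hsymm v (Θd u)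
    have h2 : (inner ℝ (A (Θd (Θ v))) (Θd u) : ℝ)
        = inner ℝ (Θd (Θ v)) (A (Θd u)) := hsymm _ _
    have h3 : (inner ℝ (A (Θd u)) v : ℝ) = inner ℝ (A (Θd u)) (Θd (Θ v)) := by
      have := horth u (v - Θd (Θ v)) hker
      rw [inner_sub_right] at this
      linarith
    rw [h1, h2, ← real_inner_comm v (A (Θd u)), ← real_inner_comm (Θd (Θ v)) (A (Θd u))]
    exact h3
  -- adjoint of key identity: Θᵀ ∘ N = A ∘ Θd
  have hNsa : LinearMap.adjoint (LinearMap.adjoint Θd ∘ₗ A ∘ₗ Θd)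
      = LinearMap.adjoint Θd ∘ₗ A ∘ₗ Θd := by
    simp [LinearMap.adjoint_comp, LinearMap.adjoint_adjoint, hAsa,
      LinearMap.comp_assoc]
  have hkey' : LinearMap.adjoint Θ ∘ₗ (LinearMap.adjoint Θd ∘ₗ A ∘ₗ Θd)
      = A ∘ₗ Θd := by
    have := congrArg LinearMap.adjoint hkey
    rw [LinearMap.adjoint_comp, LinearMap.adjoint_comp, hNsa,
      LinearMap.adjoint_adjoint, hAsa] at this
    exact this.symm
  have hΘΘd : Θ ∘ₗ Θd = LinearMap.id := LinearMap.ext hRight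
  constructor
  · -- M ∘ N = id
    apply LinearMap.ext
    intro v
    have h := congrArg (fun f => f v) hkey'
    simp only [LinearMap.comp_apply] at h ⊢
    rw [h]
    have h2 := congrArg (fun f => f (Θd v)) hA2
    simp only [LinearMap.comp_apply, LinearMap.id_apply] at h2
    rw [h2, hRight]
    rfl
  · -- N ∘ M = id
    apply LinearMap.ext
    intro v
    have h := congrArg (fun f => f (Ainv (LinearMap.adjoint Θ v))) hkey
    simp only [LinearMap.comp_apply] at h ⊢
    rw [← h]
    have h2 := congrArg (fun f => f (LinearMap.adjoint Θ v)) hA1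
    simp only [LinearMap.comp_apply, LinearMap.id_apply] at h2
    rw [h2]
    have hid : LinearMap.adjoint Θd ∘ₗ LinearMap.adjoint Θ = LinearMap.id := by
      rw [← LinearMap.adjoint_comp, hΘΘd]
      apply LinearMap.ext
      intro x
      apply ext_inner_right ℝ
      intro y
      simp [LinearMap.adjoint_inner_left]
    exact congrArg (fun f => f v) hid
end

section
/- Let H and V be finite-dimensional real inner product spaces, A : H → H self-adjoint positive definite, and Φ : V → H an injective linear map. Then Φᵀ ∘ A ∘ Φ : V → V is invertible, and its inverse equals Φ†_A ∘ A⁻¹ ∘ (Φ†_A)ᵀ, where Φ†_A is the pseudo-inverse of Φ relative to the A-inner product: Φ†_A(u) is the unique v ∈ V minimizing ‖u − Φ(v)‖_A, and Φ†_A ∘ Φ = id. -/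
/-!
Minimality of `Φd u` along the line `t ↦ Φd u + t • v` forces the first-order condition
`⟪A (u - Φ (Φd u)), Φ v⟫ = 0`, i.e. the normal equations `(Φᵀ A Φ) Φd = Φᵀ A`. Hence
`(Φᵀ A Φ) (Φd A⁻¹ Φdᵀ) = Φᵀ Φdᵀ = (Φd Φ)ᵀ = id`, and a one-sided inverse of an endomorphism
of a finite-dimensional space is two-sided.
-/

open LinearMap RealInnerProductSpace

theorem LinearMap.IsSymmetric.inner_map_eq_zero_of_forall_le {E : Type*}
    [NormedAddCommGroup E] [InnerProductSpace ℝ E] {A : E →ₗ[ℝ] E} (hA : A.IsSymmetric)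
    {e w : E} (h : ∀ t : ℝ, ⟪A e, e⟫ ≤ ⟪A (e - t • w), e - t • w⟫) : ⟪A e, w⟫ = 0 := by
  have hquad : ∀ t : ℝ, 0 ≤ ⟪A w, w⟫ * (t * t) + (-2 * ⟪A e, w⟫) * t + 0 := by
    intro t
    have ht := h t
    simp only [map_sub, map_smul, inner_sub_left, inner_sub_right, real_inner_smul_left,
      real_inner_smul_right, hA w e] at ht
    rw [real_inner_comm (A e) w] at ht
    linarith
  have hdisc := discrim_le_zero hquad
  rw [discrim] at hdisc
  nlinarith [sq_nonneg ⟪A e, w⟫]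

theorem adjoint_comp_comp_comp_eq_adjoint_comp_of_forall_le {E F : Type*}
    [NormedAddCommGroup E] [InnerProductSpace ℝ E] [FiniteDimensional ℝ E]
    [NormedAddCommGroup F] [InnerProductSpace ℝ F] [FiniteDimensional ℝ F]
    {A : F →ₗ[ℝ] F} (hA : A.IsSymmetric) {Φ : E →ₗ[ℝ] F} {P : F →ₗ[ℝ] E}
    (hP : ∀ (u : F) (v : E), ⟪A (u - Φ (P u)), u - Φ (P u)⟫ ≤ ⟪A (u - Φ v), u - Φ v⟫) :
    adjoint Φ ∘ₗ A ∘ₗ Φ ∘ₗ P = adjoint Φ ∘ₗ A := by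
  ext u
  refine ext_inner_right ℝ fun v ↦ ?_
  have hres : ⟪A (u - Φ (P u)), Φ v⟫ = 0 := hA.inner_map_eq_zero_of_forall_le fun t ↦ by
    simpa [sub_sub, map_add, map_smul] using hP u (P u + t • v)
  simp only [comp_apply, adjoint_inner_left]
  rw [map_sub, inner_sub_left, sub_eq_zero] at hres
  exact hres.symm

theorem stmt6_general
    {H V : Type*} [NormedAddCommGroup H] [InnerProductSpace ℝ H]
    [FiniteDimensional ℝ H] [NormedAddCommGroup V] [InnerProductSpace ℝ V]
    [FiniteDimensional ℝ V]
    (A : H →ₗ[ℝ] H)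
    (hAsa : LinearMap.adjoint A = A)
    (Ainv : H →ₗ[ℝ] H)
    (hA1 : A ∘ₗ Ainv = LinearMap.id)
    (Φ : V →ₗ[ℝ] H)
    (Φd : H →ₗ[ℝ] V)
    (hLeft : ∀ u : V, Φd (Φ u) = u)
    (hMin : ∀ (u : H) (v : V),
      (inner ℝ (A (u - Φ (Φd u))) (u - Φ (Φd u)) : ℝ) ≤ inner ℝ (A (u - Φ v)) (u - Φ v)) :
    (LinearMap.adjoint Φ ∘ₗ A ∘ₗ Φ) ∘ₗ
        (Φd ∘ₗ Ainv ∘ₗ LinearMap.adjoint Φd) = LinearMap.id ∧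
    (Φd ∘ₗ Ainv ∘ₗ LinearMap.adjoint Φd) ∘ₗ
        (LinearMap.adjoint Φ ∘ₗ A ∘ₗ Φ) = LinearMap.id := by
  have hA : A.IsSymmetric := (isSymmetric_iff_isSelfAdjoint A).2 (isSelfAdjoint_iff'.2 hAsa)
  have hnormal := adjoint_comp_comp_comp_eq_adjoint_comp_of_forall_le hA hMin
  have hleft : Φd ∘ₗ Φ = LinearMap.id := LinearMap.ext hLeft
  have hright : (adjoint Φ ∘ₗ A ∘ₗ Φ) ∘ₗ (Φd ∘ₗ Ainv ∘ₗ adjoint Φd) = LinearMap.id :=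
    calc (adjoint Φ ∘ₗ A ∘ₗ Φ) ∘ₗ (Φd ∘ₗ Ainv ∘ₗ adjoint Φd)
        = (adjoint Φ ∘ₗ A ∘ₗ Φ ∘ₗ Φd) ∘ₗ Ainv ∘ₗ adjoint Φd := rfl
      _ = adjoint Φ ∘ₗ (A ∘ₗ Ainv) ∘ₗ adjoint Φd := by rw [hnormal]; rfl
      _ = adjoint (Φd ∘ₗ Φ) := by rw [hA1, adjoint_comp]; rfl
      _ = LinearMap.id := by rw [hleft, adjoint_id]
  exact ⟨hright, mul_eq_one_comm.1 hright⟩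

/-- For `A : H → H` self-adjoint positive definite and `Φ : V → H`
injective linear between finite-dimensional real inner product spaces,
`Φᵀ ∘ A ∘ Φ` is invertible with inverse `Φ†_A ∘ A⁻¹ ∘ (Φ†_A)ᵀ`, where `Φ†_A` is the
pseudo-inverse of `Φ` relative to the `A`-inner product: `Φ†_A Φ = id` and `Φ†_A u`
minimizes `‖u − Φ v‖_A` over `v`. -/
theorem stmt6
    {H V : Type*} [NormedAddCommGroup H] [InnerProductSpace ℝ H]
    [FiniteDimensional ℝ H] [NormedAddCommGroup V] [InnerProductSpace ℝ V]
    [FiniteDimensional ℝ V]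
    (A : H →ₗ[ℝ] H)
    (hAsa : LinearMap.adjoint A = A)
    (hApos : ∀ u : H, u ≠ 0 → (0 : ℝ) < inner ℝ (A u) u)
    (Ainv : H →ₗ[ℝ] H)
    (hA1 : A ∘ₗ Ainv = LinearMap.id) (hA2 : Ainv ∘ₗ A = LinearMap.id)
    (Φ : V →ₗ[ℝ] H) (hΦ : Function.Injective Φ)
    (Φd : H →ₗ[ℝ] V)
    (hLeft : ∀ u : V, Φd (Φ u) = u)
    (hMin : ∀ (u : H) (v : V),
      (inner ℝ (A (u - Φ (Φd u))) (u - Φ (Φd u)) : ℝ) ≤ inner ℝ (A (u - Φ v)) (u - Φ v)) :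
    (LinearMap.adjoint Φ ∘ₗ A ∘ₗ Φ) ∘ₗ
        (Φd ∘ₗ Ainv ∘ₗ LinearMap.adjoint Φd) = LinearMap.id ∧
    (Φd ∘ₗ Ainv ∘ₗ LinearMap.adjoint Φd) ∘ₗ
        (LinearMap.adjoint Φ ∘ₗ A ∘ₗ Φ) = LinearMap.id :=
  stmt6_general A hAsa Ainv hA1 Φ Φd hLeft hMin
end

section
/- (Abstract substructuring identity) Let V, 𝕍, S, 𝕊 be finite-dimensional real inner product spaces, 𝒜 : V → V and L : 𝕍 → 𝕍 self-adjoint positive definite, ℛ : V → 𝕍 injective linear with 𝒜 = ℛᵀ L ℛ, ℬ : V → S surjective linear, B : 𝕍 → 𝕊 surjective linear, and R : S → 𝕊 injective linear, such that B ∘ ℛ = R ∘ ℬ. Assume further that for every w ∈ 𝕍 with B(w) ∈ range(R) one has w ∈ range(ℛ). Define T⁻¹ := B L⁻¹ Bᵀ (so T = (B L⁻¹ Bᵀ)⁻¹ : 𝕊 → 𝕊). Then Rᵀ T R : S → S is invertible and (Rᵀ T R)⁻¹ = ℬ 𝒜⁻¹ ℬᵀ. -/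
/-!
Given `μ : S`, let `u := 𝒜⁻¹ ℬᵀ μ`. Pushing `R ℬ u` through `T` and `L⁻¹ Bᵀ` gives a subdomain
function `z` with `B z = R ℬ u`; by the conformity hypothesis `z = ℛ x`, and then `ℬ x = ℬ u` and
`𝒜 x = ℬᵀ Rᵀ T R ℬ u`. So `x - u` lies in `ker ℬ` while `𝒜 (x - u)` lies in `range ℬᵀ = (ker ℬ)ᗮ`;
positivity of `𝒜` forces `x = u`, and injectivity of `ℬᵀ` yields `Rᵀ T R ℬ 𝒜⁻¹ ℬᵀ μ = μ`.
In finite dimension a one-sided inverse is two-sided.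
-/

open LinearMap

section

variable {V 𝕍 S 𝕊 : Type*}
  [NormedAddCommGroup V] [InnerProductSpace ℝ V] [FiniteDimensional ℝ V]
  [NormedAddCommGroup 𝕍] [InnerProductSpace ℝ 𝕍] [FiniteDimensional ℝ 𝕍]
  [NormedAddCommGroup S] [InnerProductSpace ℝ S] [FiniteDimensional ℝ S]
  [NormedAddCommGroup 𝕊] [InnerProductSpace ℝ 𝕊] [FiniteDimensional ℝ 𝕊]

theorem LinearMap.adjoint_injective_of_surjective {f : V →ₗ[ℝ] S}
    (hf : Function.Surjective f) : Function.Injective (adjoint f) := by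
  rw [← ker_eq_bot, ← orthogonal_range, range_eq_top.mpr hf, Submodule.top_orthogonal_eq_bot]

theorem eq_zero_of_mem_ker_of_apply_mem_range_adjoint {A : V →ₗ[ℝ] V}
    (hA : ∀ u : V, u ≠ 0 → (0 : ℝ) < inner ℝ (A u) u) {f : V →ₗ[ℝ] S} {d : V}
    (hd : d ∈ ker f) (hAd : A d ∈ range (adjoint f)) : d = 0 := by
  obtain ⟨s, hs⟩ := hAd
  by_contra hne
  have h0 : inner ℝ (A d) d = (0 : ℝ) := by
    rw [← hs, adjoint_inner_left, mem_ker.mp hd, inner_zero_right]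
  exact (hA d hne).ne' h0

theorem exists_conforming_extension
    {𝒜 : V →ₗ[ℝ] V} {L Linv : 𝕍 →ₗ[ℝ] 𝕍} {ℛ : V →ₗ[ℝ] 𝕍} {ℬ : V →ₗ[ℝ] S}
    {B : 𝕍 →ₗ[ℝ] 𝕊} {R : S →ₗ[ℝ] 𝕊} {T : 𝕊 →ₗ[ℝ] 𝕊}
    (h𝒜 : 𝒜 = adjoint ℛ ∘ₗ L ∘ₗ ℛ) (hR : Function.Injective R) (hComm : B ∘ₗ ℛ = R ∘ₗ ℬ)
    (hConf : ∀ w : 𝕍, B w ∈ range R → w ∈ range ℛ) (hL : L ∘ₗ Linv = LinearMap.id)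
    (hT : (B ∘ₗ Linv ∘ₗ adjoint B) ∘ₗ T = LinearMap.id) (s : S) :
    ∃ x : V, ℬ x = s ∧ 𝒜 x = adjoint ℬ (adjoint R (T (R s))) := by
  set z := Linv (adjoint B (T (R s)))
  have hBz : B z = R s := LinearMap.congr_fun hT (R s)
  obtain ⟨x, hx⟩ := hConf z ⟨s, hBz.symm⟩
  refine ⟨x, hR ?_, ?_⟩
  · rw [← hBz, ← hx, ← comp_apply R ℬ, ← hComm, comp_apply]
  · have hadj : adjoint ℛ ∘ₗ adjoint B = adjoint ℬ ∘ₗ adjoint R := by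
      rw [← adjoint_comp, ← adjoint_comp, hComm]
    calc 𝒜 x = adjoint ℛ (L z) := by rw [h𝒜, comp_apply, comp_apply, hx]
      _ = adjoint ℛ (adjoint B (T (R s))) := congrArg _ (LinearMap.congr_fun hL _)
      _ = adjoint ℬ (adjoint R (T (R s))) := LinearMap.congr_fun hadj _

end

theorem stmt9_general
    {V 𝕍 S 𝕊 : Type*}
    [NormedAddCommGroup V] [InnerProductSpace ℝ V] [FiniteDimensional ℝ V]
    [NormedAddCommGroup 𝕍] [InnerProductSpace ℝ 𝕍] [FiniteDimensional ℝ 𝕍]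
    [NormedAddCommGroup S] [InnerProductSpace ℝ S] [FiniteDimensional ℝ S]
    [NormedAddCommGroup 𝕊] [InnerProductSpace ℝ 𝕊] [FiniteDimensional ℝ 𝕊]
    (𝒜 : V →ₗ[ℝ] V) (L : 𝕍 →ₗ[ℝ] 𝕍)
    (h𝒜pos : ∀ u : V, u ≠ 0 → (0 : ℝ) < inner ℝ (𝒜 u) u)
    (ℛ : V →ₗ[ℝ] 𝕍)
    (h𝒜 : 𝒜 = LinearMap.adjoint ℛ ∘ₗ L ∘ₗ ℛ)
    (ℬ : V →ₗ[ℝ] S) (hℬ : Function.Surjective ℬ)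
    (B : 𝕍 →ₗ[ℝ] 𝕊)
    (R : S →ₗ[ℝ] 𝕊) (hR : Function.Injective R)
    (hComm : B ∘ₗ ℛ = R ∘ₗ ℬ)
    (hConf : ∀ w : 𝕍, B w ∈ LinearMap.range R → w ∈ LinearMap.range ℛ)
    (Linv : 𝕍 →ₗ[ℝ] 𝕍)
    (hL1 : L ∘ₗ Linv = LinearMap.id)
    (𝒜inv : V →ₗ[ℝ] V)
    (h𝒜1 : 𝒜 ∘ₗ 𝒜inv = LinearMap.id)
    (T : 𝕊 →ₗ[ℝ] 𝕊)
    (hT2 : (B ∘ₗ Linv ∘ₗ LinearMap.adjoint B) ∘ₗ T = LinearMap.id) :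
    (LinearMap.adjoint R ∘ₗ T ∘ₗ R) ∘ₗ
        (ℬ ∘ₗ 𝒜inv ∘ₗ LinearMap.adjoint ℬ) = LinearMap.id ∧
    (ℬ ∘ₗ 𝒜inv ∘ₗ LinearMap.adjoint ℬ) ∘ₗ
        (LinearMap.adjoint R ∘ₗ T ∘ₗ R) = LinearMap.id := by
  have hleft : (adjoint R ∘ₗ T ∘ₗ R) ∘ₗ (ℬ ∘ₗ 𝒜inv ∘ₗ adjoint ℬ) = LinearMap.id := by
    ext μ
    set u := 𝒜inv (adjoint ℬ μ)
    have hAu : 𝒜 u = adjoint ℬ μ := LinearMap.congr_fun h𝒜1 _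
    obtain ⟨x, hxu, hAx⟩ := exists_conforming_extension h𝒜 hR hComm hConf hL1 hT2 (ℬ u)
    have hx : x = u := sub_eq_zero.mp <| eq_zero_of_mem_ker_of_apply_mem_range_adjoint h𝒜pos
      (by rw [mem_ker, map_sub, hxu, sub_self])
      ⟨adjoint R (T (R (ℬ u))) - μ, by rw [map_sub, map_sub, hAx, hAu]⟩
    apply adjoint_injective_of_surjective hℬ
    change adjoint ℬ (adjoint R (T (R (ℬ u)))) = adjoint ℬ μ
    rw [← hAx, hx, hAu]
  exact ⟨hleft, (comp_eq_id_comm ℝ S).mp hleft⟩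

/-- abstract substructuring identity: With `𝒜 = ℛᵀ L ℛ`, `B ∘ ℛ = R ∘ ℬ`,
`ℬ, B` surjective, `ℛ, R` injective, the conformity condition
`B w ∈ range R → w ∈ range ℛ`, and `T := (B L⁻¹ Bᵀ)⁻¹` the Schur complement, the
operator `Rᵀ T R` is invertible with inverse `ℬ 𝒜⁻¹ ℬᵀ`. -/
theorem stmt9
    {V 𝕍 S 𝕊 : Type*}
    [NormedAddCommGroup V] [InnerProductSpace ℝ V] [FiniteDimensional ℝ V]
    [NormedAddCommGroup 𝕍] [InnerProductSpace ℝ 𝕍] [FiniteDimensional ℝ 𝕍]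
    [NormedAddCommGroup S] [InnerProductSpace ℝ S] [FiniteDimensional ℝ S]
    [NormedAddCommGroup 𝕊] [InnerProductSpace ℝ 𝕊] [FiniteDimensional ℝ 𝕊]
    (𝒜 : V →ₗ[ℝ] V) (L : 𝕍 →ₗ[ℝ] 𝕍)
    (h𝒜sa : LinearMap.adjoint 𝒜 = 𝒜)
    (h𝒜pos : ∀ u : V, u ≠ 0 → (0 : ℝ) < inner ℝ (𝒜 u) u)
    (hLsa : LinearMap.adjoint L = L)
    (hLpos : ∀ u : 𝕍, u ≠ 0 → (0 : ℝ) < inner ℝ (L u) u)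
    (ℛ : V →ₗ[ℝ] 𝕍) (hℛ : Function.Injective ℛ)
    (h𝒜 : 𝒜 = LinearMap.adjoint ℛ ∘ₗ L ∘ₗ ℛ)
    (ℬ : V →ₗ[ℝ] S) (hℬ : Function.Surjective ℬ)
    (B : 𝕍 →ₗ[ℝ] 𝕊) (hB : Function.Surjective B)
    (R : S →ₗ[ℝ] 𝕊) (hR : Function.Injective R)
    (hComm : B ∘ₗ ℛ = R ∘ₗ ℬ)
    (hConf : ∀ w : 𝕍, B w ∈ LinearMap.range R → w ∈ LinearMap.range ℛ)
    (Linv : 𝕍 →ₗ[ℝ] 𝕍)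
    (hL1 : L ∘ₗ Linv = LinearMap.id) (hL2 : Linv ∘ₗ L = LinearMap.id)
    (𝒜inv : V →ₗ[ℝ] V)
    (h𝒜1 : 𝒜 ∘ₗ 𝒜inv = LinearMap.id) (h𝒜2 : 𝒜inv ∘ₗ 𝒜 = LinearMap.id)
    (T : 𝕊 →ₗ[ℝ] 𝕊)
    (hT1 : T ∘ₗ (B ∘ₗ Linv ∘ₗ LinearMap.adjoint B) = LinearMap.id)
    (hT2 : (B ∘ₗ Linv ∘ₗ LinearMap.adjoint B) ∘ₗ T = LinearMap.id) :
    (LinearMap.adjoint R ∘ₗ T ∘ₗ R) ∘ₗ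
        (ℬ ∘ₗ 𝒜inv ∘ₗ LinearMap.adjoint ℬ) = LinearMap.id ∧
    (ℬ ∘ₗ 𝒜inv ∘ₗ LinearMap.adjoint ℬ) ∘ₗ
        (LinearMap.adjoint R ∘ₗ T ∘ₗ R) = LinearMap.id :=
  stmt9_general 𝒜 L h𝒜pos ℛ h𝒜 ℬ hℬ B R hR hComm hConf Linv hL1 𝒜inv h𝒜1 T hT2
end

section
/- Under the hypotheses of the abstract substructuring identity (B ∘ ℛ = R ∘ ℬ with 𝒜 = ℛᵀ L ℛ, ℬ, B surjective, ℛ, R injective, and B(w) ∈ range(R) ⇒ w ∈ range(ℛ)), the pseudo-inverses satisfy the commutation relation ℛ ∘ ℬ†_𝒜 = B†_L ∘ R, where ℬ†_𝒜 is the pseudo-inverse of ℬ relative to the 𝒜-norm on V and B†_L is the pseudo-inverse of B relative to the L-norm on 𝕍. -/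
/-!
Since `𝒜 = ℛᵀ L ℛ`, the `𝒜`-energy of `v` is the `L`-energy of `ℛ v`. The conformity condition
says that every preimage of `R s` under `B` has the form `ℛ v`, and then `ℬ v = s` by injectivity
of `R`; so `ℛ` carries the `𝒜`-minimal preimage of `s` to an `L`-minimal preimage of `R s`.
Minimal preimages are unique because the energy is strictly convex (parallelogram identity).
-/

open LinearMap
open scoped RealInnerProductSpace

section MinimalPreimage

variable {E F : Type*} [NormedAddCommGroup E] [InnerProductSpace ℝ E] [AddCommGroup F]
  [Module ℝ F]

/-- `x = B†_L t` in the paper's notation. -/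
def IsMinimalPreimage (L : E →ₗ[ℝ] E) (B : E →ₗ[ℝ] F) (t : F) (x : E) : Prop :=
  B x = t ∧ ∀ w, B w = t → ⟪L x, x⟫ ≤ ⟪L w, w⟫

theorem inner_map_add_add_inner_map_sub (L : E →ₗ[ℝ] E) (x y : E) :
    ⟪L (x + y), x + y⟫ + ⟪L (x - y), x - y⟫ = 2 * (⟪L x, x⟫ + ⟪L y, y⟫) := by
  simp only [map_add, map_sub, inner_add_left, inner_add_right, inner_sub_left, inner_sub_right]
  ring

theorem IsMinimalPreimage.eq {L : E →ₗ[ℝ] E} (hL : ∀ u : E, u ≠ 0 → 0 < ⟪L u, u⟫)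
    {B : E →ₗ[ℝ] F} {t : F} {x y : E} (hx : IsMinimalPreimage L B t x)
    (hy : IsMinimalPreimage L B t y) : x = y := by
  have hmid : B ((2 : ℝ)⁻¹ • (x + y)) = t := by
    rw [map_smul, map_add, hx.1, hy.1, ← two_smul ℝ t, smul_smul, inv_mul_cancel₀ two_ne_zero,
      one_smul]
  have hx_le_mid := hx.2 _ hmid
  have hy_le_x := hy.2 x hx.1
  have hmid_eq : ⟪L ((2 : ℝ)⁻¹ • (x + y)), (2 : ℝ)⁻¹ • (x + y)⟫ = ⟪L (x + y), x + y⟫ / 4 := by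
    simp only [map_smul, inner_smul_left, inner_smul_right, RCLike.conj_to_real]
    ring
  -- parallelogram: `⟪L (x - y), x - y⟫ = 2 ⟪L x, x⟫ + 2 ⟪L y, y⟫ - 4 (energy of the midpoint) ≤ 0`
  have hpar := inner_map_add_add_inner_map_sub L x y
  by_contra hne
  have hpos := hL (x - y) (sub_ne_zero.2 hne)
  linarith

end MinimalPreimage

theorem IsMinimalPreimage.map_of_conforming {V 𝕍 S 𝕊 : Type*}
    [NormedAddCommGroup V] [InnerProductSpace ℝ V] [FiniteDimensional ℝ V]
    [NormedAddCommGroup 𝕍] [InnerProductSpace ℝ 𝕍] [FiniteDimensional ℝ 𝕍]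
    [AddCommGroup S] [Module ℝ S] [AddCommGroup 𝕊] [Module ℝ 𝕊]
    {L : 𝕍 →ₗ[ℝ] 𝕍} {ℛ : V →ₗ[ℝ] 𝕍} {ℬ : V →ₗ[ℝ] S} {B : 𝕍 →ₗ[ℝ] 𝕊} {R : S →ₗ[ℝ] 𝕊}
    (hR : Function.Injective R) (hComm : B ∘ₗ ℛ = R ∘ₗ ℬ)
    (hConf : ∀ w : 𝕍, B w ∈ range R → w ∈ range ℛ) {s : S} {u : V}
    (hu : IsMinimalPreimage (adjoint ℛ ∘ₗ L ∘ₗ ℛ) ℬ s u) :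
    IsMinimalPreimage L B (R s) (ℛ u) := by
  have hcomm : ∀ v, B (ℛ v) = R (ℬ v) := LinearMap.ext_iff.1 hComm
  refine ⟨by rw [hcomm, hu.1], fun w hw => ?_⟩
  obtain ⟨v, rfl⟩ := hConf w (hw ▸ mem_range_self R s)
  have hv : ℬ v = s := hR (by rw [← hcomm, hw])
  simpa only [comp_apply, adjoint_inner_left] using hu.2 v hv

theorem stmt10_general
    {V 𝕍 S 𝕊 : Type*}
    [NormedAddCommGroup V] [InnerProductSpace ℝ V] [FiniteDimensional ℝ V]
    [NormedAddCommGroup 𝕍] [InnerProductSpace ℝ 𝕍] [FiniteDimensional ℝ 𝕍]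
    [NormedAddCommGroup S] [InnerProductSpace ℝ S]
    [NormedAddCommGroup 𝕊] [InnerProductSpace ℝ 𝕊]
    (𝒜 : V →ₗ[ℝ] V) (L : 𝕍 →ₗ[ℝ] 𝕍)
    (hLpos : ∀ u : 𝕍, u ≠ 0 → (0 : ℝ) < inner ℝ (L u) u)
    (ℛ : V →ₗ[ℝ] 𝕍)
    (h𝒜 : 𝒜 = LinearMap.adjoint ℛ ∘ₗ L ∘ₗ ℛ)
    (ℬ : V →ₗ[ℝ] S)
    (B : 𝕍 →ₗ[ℝ] 𝕊)
    (R : S →ₗ[ℝ] 𝕊) (hR : Function.Injective R)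
    (hComm : B ∘ₗ ℛ = R ∘ₗ ℬ)
    (hConf : ∀ w : 𝕍, B w ∈ LinearMap.range R → w ∈ LinearMap.range ℛ)
    (ℬd : S →ₗ[ℝ] V)
    (hℬd1 : ∀ s : S, ℬ (ℬd s) = s)
    (hℬd2 : ∀ (s : S) (v : V), ℬ v = s →
      (inner ℝ (𝒜 (ℬd s)) (ℬd s) : ℝ) ≤ inner ℝ (𝒜 v) v)
    (Bd : 𝕊 →ₗ[ℝ] 𝕍)
    (hBd1 : ∀ t : 𝕊, B (Bd t) = t)
    (hBd2 : ∀ (t : 𝕊) (w : 𝕍), B w = t →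
      (inner ℝ (L (Bd t)) (Bd t) : ℝ) ≤ inner ℝ (L w) w) :
    ℛ ∘ₗ ℬd = Bd ∘ₗ R := by
  subst h𝒜
  ext s
  exact (IsMinimalPreimage.map_of_conforming hR hComm hConf ⟨hℬd1 s, hℬd2 s⟩).eq hLpos
    ⟨hBd1 (R s), hBd2 (R s)⟩

/-- Under the hypotheses of the abstract substructuring identity
(`B ∘ ℛ = R ∘ ℬ`, `𝒜 = ℛᵀ L ℛ`, `ℬ, B` surjective, `ℛ, R` injective, and
`B w ∈ range R → w ∈ range ℛ`), the pseudo-inverses satisfy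
`ℛ ∘ ℬ†_𝒜 = B†_L ∘ R`, where `ℬ†_𝒜` is the pseudo-inverse of `ℬ` relative to the
`𝒜`-norm and `B†_L` the pseudo-inverse of `B` relative to the `L`-norm. -/
theorem stmt10
    {V 𝕍 S 𝕊 : Type*}
    [NormedAddCommGroup V] [InnerProductSpace ℝ V] [FiniteDimensional ℝ V]
    [NormedAddCommGroup 𝕍] [InnerProductSpace ℝ 𝕍] [FiniteDimensional ℝ 𝕍]
    [NormedAddCommGroup S] [InnerProductSpace ℝ S] [FiniteDimensional ℝ S]
    [NormedAddCommGroup 𝕊] [InnerProductSpace ℝ 𝕊] [FiniteDimensional ℝ 𝕊]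
    (𝒜 : V →ₗ[ℝ] V) (L : 𝕍 →ₗ[ℝ] 𝕍)
    (h𝒜sa : LinearMap.adjoint 𝒜 = 𝒜)
    (h𝒜pos : ∀ u : V, u ≠ 0 → (0 : ℝ) < inner ℝ (𝒜 u) u)
    (hLsa : LinearMap.adjoint L = L)
    (hLpos : ∀ u : 𝕍, u ≠ 0 → (0 : ℝ) < inner ℝ (L u) u)
    (ℛ : V →ₗ[ℝ] 𝕍) (hℛ : Function.Injective ℛ)
    (h𝒜 : 𝒜 = LinearMap.adjoint ℛ ∘ₗ L ∘ₗ ℛ)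
    (ℬ : V →ₗ[ℝ] S) (hℬ : Function.Surjective ℬ)
    (B : 𝕍 →ₗ[ℝ] 𝕊) (hB : Function.Surjective B)
    (R : S →ₗ[ℝ] 𝕊) (hR : Function.Injective R)
    (hComm : B ∘ₗ ℛ = R ∘ₗ ℬ)
    (hConf : ∀ w : 𝕍, B w ∈ LinearMap.range R → w ∈ LinearMap.range ℛ)
    (ℬd : S →ₗ[ℝ] V)
    (hℬd1 : ∀ s : S, ℬ (ℬd s) = s)
    (hℬd2 : ∀ (s : S) (v : V), ℬ v = s →
      (inner ℝ (𝒜 (ℬd s)) (ℬd s) : ℝ) ≤ inner ℝ (𝒜 v) v)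
    (Bd : 𝕊 →ₗ[ℝ] 𝕍)
    (hBd1 : ∀ t : 𝕊, B (Bd t) = t)
    (hBd2 : ∀ (t : 𝕊) (w : 𝕍), B w = t →
      (inner ℝ (L (Bd t)) (Bd t) : ℝ) ≤ inner ℝ (L w) w) :
    ℛ ∘ₗ ℬd = Bd ∘ₗ R :=
  stmt10_general 𝒜 L hLpos ℛ h𝒜 ℬ B R hR hComm hConf ℬd hℬd1 hℬd2 Bd hBd1 hBd2
end

section
/- Let H be a finite-dimensional real inner product space, L, L̃ : H → H self-adjoint positive definite, and ℬ : H → S a surjective linear map onto a finite-dimensional space S with adjoint ℬᵀ : S → H. Then for every nonzero functional u ∈ S, the generalized Rayleigh quotient ⟨ℬ L̃⁻¹ ℬᵀ u, u⟩ / ⟨ℬ L⁻¹ ℬᵀ u, u⟩ lies between the smallest and largest eigenvalues of L̃⁻¹L. Consequently cond((ℬ L̃⁻¹ ℬᵀ)(ℬ L⁻¹ ℬᵀ)⁻¹) ≤ cond(L̃⁻¹ L), where cond denotes the ratio of the largest to smallest (real, positive) eigenvalue. -/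
/-!
Both inequalities are statements about quadratic forms. On `H`, the operator `L̃⁻¹ L` is
symmetric for the energy inner product `⟪L x, y⟫`, so its Rayleigh quotient in that inner product
lies between its extreme eigenvalues; evaluated at `x = L⁻¹ v` this reads
`a ⟪L⁻¹ v, v⟫ ≤ ⟪L̃⁻¹ v, v⟫ ≤ b ⟪L⁻¹ v, v⟫`. Taking `v = ℬᵀ u` transfers the bounds to `S`.
An eigenvector `u` of `(ℬ L̃⁻¹ ℬᵀ)(ℬ L⁻¹ ℬᵀ)⁻¹` with eigenvalue `λ` gives `w = (ℬ L⁻¹ ℬᵀ)⁻¹ u` with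
`⟪ℬ L̃⁻¹ ℬᵀ w, w⟫ = λ ⟪ℬ L⁻¹ ℬᵀ w, w⟫`, and the second form is positive because `ℬᵀ` is injective.
-/

open Module.End
open scoped RealInnerProductSpace

namespace LinearMap

section Spectral

variable {E : Type*} [NormedAddCommGroup E] [InnerProductSpace ℝ E] [FiniteDimensional ℝ E]
  {T : E →ₗ[ℝ] E}

theorem IsSymmetric.inner_apply_self_eq_sum (hT : T.IsSymmetric) (x : E) :
    ⟪T x, x⟫ = ∑ i, hT.eigenvalues rfl i * ⟪hT.eigenvectorBasis rfl i, x⟫ ^ 2 := by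
  rw [← (hT.eigenvectorBasis rfl).sum_inner_mul_inner]
  refine Finset.sum_congr rfl fun i _ => ?_
  rw [hT, hT.apply_eigenvectorBasis, real_inner_smul_right, real_inner_comm x]
  simp only [RCLike.ofReal_real_eq_id, _root_.id_eq]
  ring

theorem IsSymmetric.mul_norm_sq_le_inner_apply_self (hT : T.IsSymmetric) {a : ℝ}
    (ha : ∀ μ, HasEigenvalue T μ → a ≤ μ) (x : E) : a * ‖x‖ ^ 2 ≤ ⟪T x, x⟫ := by
  rw [hT.inner_apply_self_eq_sum, ← (hT.eigenvectorBasis rfl).sum_sq_inner_right, Finset.mul_sum]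
  exact Finset.sum_le_sum fun i _ =>
    mul_le_mul_of_nonneg_right (ha _ (hT.hasEigenvalue_eigenvalues rfl i)) (sq_nonneg _)

theorem IsSymmetric.inner_apply_self_le_mul_norm_sq (hT : T.IsSymmetric) {b : ℝ}
    (hb : ∀ μ, HasEigenvalue T μ → μ ≤ b) (x : E) : ⟪T x, x⟫ ≤ b * ‖x‖ ^ 2 := by
  rw [hT.inner_apply_self_eq_sum, ← (hT.eigenvectorBasis rfl).sum_sq_inner_right, Finset.mul_sum]
  exact Finset.sum_le_sum fun i _ =>
    mul_le_mul_of_nonneg_right (hb _ (hT.hasEigenvalue_eigenvalues rfl i)) (sq_nonneg _)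

end Spectral

theorem _root_.InnerProductSpace.Core.inner_apply_self_bounds_of_hasEigenvalue
    {F : Type*} [AddCommGroup F] [Module ℝ F] [FiniteDimensional ℝ F]
    (c : InnerProductSpace.Core ℝ F) {T : F →ₗ[ℝ] F}
    (hT : ∀ x y, c.inner (T x) y = c.inner x (T y)) {a b : ℝ}
    (hab : ∀ μ, HasEigenvalue T μ → a ≤ μ ∧ μ ≤ b) (x : F) :
    a * c.inner x x ≤ c.inner (T x) x ∧ c.inner (T x) x ≤ b * c.inner x x := by
  let _ : NormedAddCommGroup F := c.toNormedAddCommGroup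
  let _ : InnerProductSpace ℝ F := InnerProductSpace.ofCore c.toCore
  have hTsymm : T.IsSymmetric := hT
  have hxx : c.inner x x = ‖x‖ ^ 2 := real_inner_self_eq_norm_sq x
  rw [hxx]
  exact ⟨hTsymm.mul_norm_sq_le_inner_apply_self (fun μ hμ => (hab μ hμ).1) x,
    hTsymm.inner_apply_self_le_mul_norm_sq (fun μ hμ => (hab μ hμ).2) x⟩

variable {H : Type*} [NormedAddCommGroup H] [InnerProductSpace ℝ H]

theorem IsSymmetric.of_comp_eq_id {A B : H →ₗ[ℝ] H} (hA : A.IsSymmetric) (hAB : A ∘ₗ B = id) :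
    B.IsSymmetric := fun x y => by
  have hABapply : ∀ z, A (B z) = z := fun z => congr($hAB z)
  calc ⟪B x, y⟫ = ⟪B x, A (B y)⟫ := by rw [hABapply]
    _ = ⟪A (B x), B y⟫ := (hA _ _).symm
    _ = ⟪x, B y⟫ := by rw [hABapply]

theorem inner_apply_self_pos_of_comp_eq_id {A B : H →ₗ[ℝ] H}
    (hA : ∀ x, x ≠ 0 → 0 < ⟪A x, x⟫) (hAB : A ∘ₗ B = id) {x : H} (hx : x ≠ 0) :
    0 < ⟪B x, x⟫ := by
  have hABapply : A (B x) = x := congr($hAB x)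
  have hBx : B x ≠ 0 := fun h => hx (by rw [← hABapply, h, map_zero])
  simpa only [hABapply, real_inner_comm] using hA (B x) hBx

abbrev energyCore (L : H →ₗ[ℝ] H) (hL : L.IsSymmetric) (hLpos : ∀ x, x ≠ 0 → 0 < ⟪L x, x⟫) :
    InnerProductSpace.Core ℝ H where
  inner x y := ⟪L x, y⟫
  conj_inner_symm x y := by simp only [starRingEnd_apply, star_trivial, hL y, real_inner_comm]
  re_inner_nonneg x := by
    rcases eq_or_ne x 0 with rfl | hx
    · simp
    · exact (hLpos x hx).le
  add_left x y z := by simp only [map_add, inner_add_left]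
  smul_left x y r := by simp [map_smul, real_inner_smul_left]
  definite x hx := by
    by_contra h
    exact (hLpos x h).ne' hx

theorem inner_apply_self_bounds_of_hasEigenvalue_comp [FiniteDimensional ℝ H]
    {L M Linv : H →ₗ[ℝ] H} (hL : L.IsSymmetric) (hLpos : ∀ x, x ≠ 0 → 0 < ⟪L x, x⟫)
    (hLinv : L ∘ₗ Linv = id) (hM : M.IsSymmetric) {a b : ℝ}
    (hab : ∀ μ, HasEigenvalue (M ∘ₗ L) μ → a ≤ μ ∧ μ ≤ b) (v : H) :
    a * ⟪Linv v, v⟫ ≤ ⟪M v, v⟫ ∧ ⟪M v, v⟫ ≤ b * ⟪Linv v, v⟫ := by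
  have hLLinv : L (Linv v) = v := congr($hLinv v)
  -- `M ∘ L` is symmetric for the energy inner product `⟪L x, y⟫`
  have hsymm : ∀ x y, (energyCore L hL hLpos).inner ((M ∘ₗ L) x) y =
      (energyCore L hL hLpos).inner x ((M ∘ₗ L) y) := fun x y => by
    change ⟪L (M (L x)), y⟫ = ⟪L x, M (L y)⟫
    rw [hL, hM]
  have h := (energyCore L hL hLpos).inner_apply_self_bounds_of_hasEigenvalue hsymm hab (Linv v)
  change a * ⟪L (Linv v), Linv v⟫ ≤ ⟪L (M (L (Linv v))), Linv v⟫ ∧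
    ⟪L (M (L (Linv v))), Linv v⟫ ≤ b * ⟪L (Linv v), Linv v⟫ at h
  rwa [hLLinv, hL (M v), hLLinv, real_inner_comm (Linv v) v] at h

variable {S : Type*} [NormedAddCommGroup S] [InnerProductSpace ℝ S]

theorem inner_comp_comp_adjoint_apply_self [FiniteDimensional ℝ H] [FiniteDimensional ℝ S]
    (B : H →ₗ[ℝ] S) (M : H →ₗ[ℝ] H) (u : S) :
    ⟪(B ∘ₗ M ∘ₗ B.adjoint) u, u⟫ = ⟪M (B.adjoint u), B.adjoint u⟫ :=
  (adjoint_inner_right B _ u).symm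

theorem adjoint_injective_of_surjective_s12 [FiniteDimensional ℝ H] [FiniteDimensional ℝ S]
    {B : H →ₗ[ℝ] S} (hB : Function.Surjective B) : Function.Injective B.adjoint := by
  rw [← ker_eq_bot, ← orthogonal_range, range_eq_top.mpr hB, Submodule.top_orthogonal_eq_bot]

theorem hasEigenvalue_comp_bounds {P Q K : S →ₗ[ℝ] S} (hQK : Q ∘ₗ K = id)
    (hQpos : ∀ u, u ≠ 0 → 0 < ⟪Q u, u⟫) {a b : ℝ}
    (hPQ : ∀ u, a * ⟪Q u, u⟫ ≤ ⟪P u, u⟫ ∧ ⟪P u, u⟫ ≤ b * ⟪Q u, u⟫) {μ : ℝ}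
    (hμ : HasEigenvalue (P ∘ₗ K) μ) : a ≤ μ ∧ μ ≤ b := by
  obtain ⟨u, hu⟩ := hμ.exists_hasEigenvector
  have hQKu : Q (K u) = u := congr($hQK u)
  have hKu : K u ≠ 0 := fun h => hu.2 (by rw [← hQKu, h, map_zero])
  -- `K u` is a generalized eigenvector: `P (K u) = μ • Q (K u)`
  have hPK : ⟪P (K u), K u⟫ = μ * ⟪Q (K u), K u⟫ := by
    rw [show P (K u) = μ • u from hu.apply_eq_smul, hQKu, real_inner_smul_left]
  have hpos := hQpos (K u) hKu
  obtain ⟨hlow, hupp⟩ := hPQ (K u)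
  rw [hPK] at hlow hupp
  exact ⟨le_of_mul_le_mul_right hlow hpos, le_of_mul_le_mul_right hupp hpos⟩

end LinearMap

open LinearMap in
theorem stmt12_general
    {H S : Type*} [NormedAddCommGroup H] [InnerProductSpace ℝ H]
    [FiniteDimensional ℝ H] [NormedAddCommGroup S] [InnerProductSpace ℝ S]
    [FiniteDimensional ℝ S]
    (L Lt : H →ₗ[ℝ] H)
    (hLsa : LinearMap.adjoint L = L)
    (hLpos : ∀ u : H, u ≠ 0 → (0 : ℝ) < inner ℝ (L u) u)
    (hLtsa : LinearMap.adjoint Lt = Lt)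
    (Linv Ltinv : H →ₗ[ℝ] H)
    (hL1 : L ∘ₗ Linv = LinearMap.id)
    (hLt1 : Lt ∘ₗ Ltinv = LinearMap.id)
    (ℬ : H →ₗ[ℝ] S) (hℬ : Function.Surjective ℬ)
    (Kinv : S →ₗ[ℝ] S)
    (hK1 : (ℬ ∘ₗ Linv ∘ₗ LinearMap.adjoint ℬ) ∘ₗ Kinv = LinearMap.id)
    (a b : ℝ)
    (hab : ∀ lam : ℝ, Module.End.HasEigenvalue (Ltinv ∘ₗ L : Module.End ℝ H) lam →
      a ≤ lam ∧ lam ≤ b) :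
    (∀ u : S, u ≠ 0 →
      a * (inner ℝ ((ℬ ∘ₗ Linv ∘ₗ LinearMap.adjoint ℬ) u) u : ℝ) ≤
          inner ℝ ((ℬ ∘ₗ Ltinv ∘ₗ LinearMap.adjoint ℬ) u) u ∧
      (inner ℝ ((ℬ ∘ₗ Ltinv ∘ₗ LinearMap.adjoint ℬ) u) u : ℝ) ≤
          b * inner ℝ ((ℬ ∘ₗ Linv ∘ₗ LinearMap.adjoint ℬ) u) u) ∧
    (∀ lam : ℝ,
      Module.End.HasEigenvalue
        ((ℬ ∘ₗ Ltinv ∘ₗ LinearMap.adjoint ℬ) ∘ₗ Kinv : Module.End ℝ S) lam →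
      a ≤ lam ∧ lam ≤ b) := by
  have hL : L.IsSymmetric := (isSymmetric_iff_isSelfAdjoint L).mpr (isSelfAdjoint_iff'.mpr hLsa)
  have hLtinv : Ltinv.IsSymmetric :=
    ((isSymmetric_iff_isSelfAdjoint Lt).mpr (isSelfAdjoint_iff'.mpr hLtsa)).of_comp_eq_id hLt1
  have hS : ∀ u : S,
      a * ⟪(ℬ ∘ₗ Linv ∘ₗ ℬ.adjoint) u, u⟫ ≤ ⟪(ℬ ∘ₗ Ltinv ∘ₗ ℬ.adjoint) u, u⟫ ∧
      ⟪(ℬ ∘ₗ Ltinv ∘ₗ ℬ.adjoint) u, u⟫ ≤ b * ⟪(ℬ ∘ₗ Linv ∘ₗ ℬ.adjoint) u, u⟫ := fun u => by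
    simp only [inner_comp_comp_adjoint_apply_self]
    exact inner_apply_self_bounds_of_hasEigenvalue_comp hL hLpos hL1 hLtinv hab _
  have hSpos : ∀ u : S, u ≠ 0 → 0 < ⟪(ℬ ∘ₗ Linv ∘ₗ ℬ.adjoint) u, u⟫ := fun u hu => by
    rw [inner_comp_comp_adjoint_apply_self]
    exact inner_apply_self_pos_of_comp_eq_id hLpos hL1
      ((map_ne_zero_iff _ (adjoint_injective_of_surjective_s12 hℬ)).mpr hu)
  exact ⟨fun u _ => hS u, fun _ => hasEigenvalue_comp_bounds hK1 hSpos hS⟩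

/-- For `L, L̃` self-adjoint positive definite on `H` and `ℬ : H → S`
surjective, the generalized Rayleigh quotient
`⟨ℬ L̃⁻¹ ℬᵀ u, u⟩ / ⟨ℬ L⁻¹ ℬᵀ u, u⟩` (for `u ≠ 0`) lies between the extreme
eigenvalues of `L̃⁻¹L`; consequently every eigenvalue of
`(ℬ L̃⁻¹ ℬᵀ)(ℬ L⁻¹ ℬᵀ)⁻¹` lies between these bounds, which yields
`cond((ℬ L̃⁻¹ ℬᵀ)(ℬ L⁻¹ ℬᵀ)⁻¹) ≤ cond(L̃⁻¹ L)`. -/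
theorem stmt12
    {H S : Type*} [NormedAddCommGroup H] [InnerProductSpace ℝ H]
    [FiniteDimensional ℝ H] [NormedAddCommGroup S] [InnerProductSpace ℝ S]
    [FiniteDimensional ℝ S]
    (L Lt : H →ₗ[ℝ] H)
    (hLsa : LinearMap.adjoint L = L)
    (hLpos : ∀ u : H, u ≠ 0 → (0 : ℝ) < inner ℝ (L u) u)
    (hLtsa : LinearMap.adjoint Lt = Lt)
    (hLtpos : ∀ u : H, u ≠ 0 → (0 : ℝ) < inner ℝ (Lt u) u)
    (Linv Ltinv : H →ₗ[ℝ] H)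
    (hL1 : L ∘ₗ Linv = LinearMap.id) (hL2 : Linv ∘ₗ L = LinearMap.id)
    (hLt1 : Lt ∘ₗ Ltinv = LinearMap.id) (hLt2 : Ltinv ∘ₗ Lt = LinearMap.id)
    (ℬ : H →ₗ[ℝ] S) (hℬ : Function.Surjective ℬ)
    (Kinv : S →ₗ[ℝ] S)
    (hK1 : (ℬ ∘ₗ Linv ∘ₗ LinearMap.adjoint ℬ) ∘ₗ Kinv = LinearMap.id)
    (hK2 : Kinv ∘ₗ (ℬ ∘ₗ Linv ∘ₗ LinearMap.adjoint ℬ) = LinearMap.id)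
    (a b : ℝ)
    (hab : ∀ lam : ℝ, Module.End.HasEigenvalue (Ltinv ∘ₗ L : Module.End ℝ H) lam →
      a ≤ lam ∧ lam ≤ b) :
    (∀ u : S, u ≠ 0 →
      a * (inner ℝ ((ℬ ∘ₗ Linv ∘ₗ LinearMap.adjoint ℬ) u) u : ℝ) ≤
          inner ℝ ((ℬ ∘ₗ Ltinv ∘ₗ LinearMap.adjoint ℬ) u) u ∧
      (inner ℝ ((ℬ ∘ₗ Ltinv ∘ₗ LinearMap.adjoint ℬ) u) u : ℝ) ≤
          b * inner ℝ ((ℬ ∘ₗ Linv ∘ₗ LinearMap.adjoint ℬ) u) u) ∧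
    (∀ lam : ℝ,
      Module.End.HasEigenvalue
        ((ℬ ∘ₗ Ltinv ∘ₗ LinearMap.adjoint ℬ) ∘ₗ Kinv : Module.End ℝ S) lam →
      a ≤ lam ∧ lam ≤ b) :=
  stmt12_general L Lt hLsa hLpos hLtsa Linv Ltinv hL1 hLt1 ℬ hℬ Kinv hK1 a b hab
end

section
/- Let H, S be finite-dimensional real inner product spaces, L self-adjoint positive definite on H, B : H → S surjective, and T := ((B L⁻¹ Bᵀ)⁻¹) the Schur complement operator on S. Then T is self-adjoint positive definite, and for every s ∈ S, ⟨T s, s⟩ = min{ ⟨L v, v⟩ : v ∈ H, B(v) = s }, i.e. the Schur complement energy equals the minimal energy over all liftings. -/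
/-!
The lifting `v₀ = L⁻¹ Bᵀ (T s)` satisfies `B v₀ = s` and `L v₀ = Bᵀ (T s)`, so
`⟪L v₀, u⟫ = ⟪T s, B u⟫` for every `u`. Hence its energy `⟪L v₀, v₀⟫` is `⟪T s, s⟫`, and
`v₀` is `L`-orthogonal to `ker B`, which makes it the energy minimiser among all liftings of `s`.
Self-adjointness of `T` holds because a one-sided inverse of a self-adjoint element is
self-adjoint; positivity follows from `v₀ ≠ 0` when `s ≠ 0`.
-/

open LinearMap
open scoped InnerProductSpace

theorem IsSelfAdjoint.of_mul_eq_one {R : Type*} [Monoid R] [StarMul R] {a b : R}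
    (ha : IsSelfAdjoint a) (h : a * b = 1) : IsSelfAdjoint b := by
  have hba : star b * a = 1 := by rw [← ha.star_eq, ← star_mul, h, star_one]
  calc star b = star b * (a * b) := by rw [h, mul_one]
    _ = b := by rw [← mul_assoc, hba, one_mul]

theorem LinearMap.IsPositive.inner_map_self_le {E : Type*} [NormedAddCommGroup E]
    [InnerProductSpace ℝ E] {L : E →ₗ[ℝ] E} (hL : L.IsPositive) {v₀ v : E}
    (h : ⟪L v₀, v - v₀⟫_ℝ = 0) : ⟪L v₀, v₀⟫_ℝ ≤ ⟪L v, v⟫_ℝ := by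
  have h' : ⟪L (v - v₀), v₀⟫_ℝ = 0 := by rw [hL.isSymmetric, real_inner_comm, h]
  have hsplit : ⟪L v, v⟫_ℝ = ⟪L v₀, v₀⟫_ℝ + ⟪L (v - v₀), v - v₀⟫_ℝ := by
    conv_lhs => rw [← add_sub_cancel v₀ v]
    rw [map_add, inner_add_left, inner_add_right, inner_add_right, h, h']
    ring
  linarith [hL.inner_nonneg_left (v - v₀)]

theorem stmt19_general
    {H S : Type*} [NormedAddCommGroup H] [InnerProductSpace ℝ H]
    [FiniteDimensional ℝ H] [NormedAddCommGroup S] [InnerProductSpace ℝ S]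
    [FiniteDimensional ℝ S]
    (L : H →ₗ[ℝ] H)
    (hLsa : LinearMap.adjoint L = L)
    (hLpos : ∀ u : H, u ≠ 0 → (0 : ℝ) < inner ℝ (L u) u)
    (Linv : H →ₗ[ℝ] H)
    (hL1 : L ∘ₗ Linv = LinearMap.id)
    (B : H →ₗ[ℝ] S)
    (T : S →ₗ[ℝ] S)
    (hT2 : (B ∘ₗ Linv ∘ₗ LinearMap.adjoint B) ∘ₗ T = LinearMap.id) :
    LinearMap.adjoint T = T ∧
    (∀ s : S, s ≠ 0 → (0 : ℝ) < inner ℝ (T s) s) ∧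
    (∀ s : S, IsLeast {e : ℝ | ∃ v : H, B v = s ∧ e = inner ℝ (L v) v}
      (inner ℝ (T s) s)) := by
  have hL : L.IsPositive := (isPositive_iff L).2
    ⟨(isSymmetric_iff_isSelfAdjoint L).2 hLsa, fun u => by
      rcases eq_or_ne u 0 with rfl | hu
      · simp
      · exact (hLpos u hu).le⟩
  have hLinv : IsSelfAdjoint Linv := IsSelfAdjoint.of_mul_eq_one hLsa hL1
  have hM : IsSelfAdjoint (B ∘ₗ Linv ∘ₗ adjoint B) := by
    simp only [isSelfAdjoint_iff', adjoint_comp, adjoint_adjoint, isSelfAdjoint_iff'.1 hLinv,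
      comp_assoc]
  have hT : IsSelfAdjoint T := IsSelfAdjoint.of_mul_eq_one hM hT2
  -- `lift` is the paper's harmonic lifting `B†_L`
  set lift : S →ₗ[ℝ] H := Linv ∘ₗ adjoint B ∘ₗ T
  have hB_lift (s : S) : B (lift s) = s := LinearMap.congr_fun hT2 s
  have hL_lift (s : S) (v : H) : ⟪L (lift s), v⟫_ℝ = ⟪T s, B v⟫_ℝ := by
    rw [← adjoint_inner_left]
    exact congrArg (⟪·, v⟫_ℝ) (LinearMap.congr_fun hL1 _)
  have henergy (s : S) : ⟪L (lift s), lift s⟫_ℝ = ⟪T s, s⟫_ℝ := by rw [hL_lift, hB_lift]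
  refine ⟨hT, fun s hs => ?_, fun s => ⟨⟨lift s, hB_lift s, (henergy s).symm⟩, ?_⟩⟩
  · rw [← henergy]
    exact hLpos _ fun h => hs (by rw [← hB_lift s, h, map_zero])
  · rintro _ ⟨v, rfl, rfl⟩
    rw [← henergy]
    exact hL.inner_map_self_le (by rw [hL_lift, map_sub, hB_lift, sub_self, inner_zero_right])

/-- For `L` self-adjoint positive definite on `H`, `B : H → S` surjective,
and the Schur complement `T := (B L⁻¹ Bᵀ)⁻¹`, the operator `T` is self-adjoint positive
definite and its quadratic form is the minimal lifting energy:
`⟨T s, s⟩ = min { ⟨L v, v⟩ : B v = s }`. -/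
theorem stmt19
    {H S : Type*} [NormedAddCommGroup H] [InnerProductSpace ℝ H]
    [FiniteDimensional ℝ H] [NormedAddCommGroup S] [InnerProductSpace ℝ S]
    [FiniteDimensional ℝ S]
    (L : H →ₗ[ℝ] H)
    (hLsa : LinearMap.adjoint L = L)
    (hLpos : ∀ u : H, u ≠ 0 → (0 : ℝ) < inner ℝ (L u) u)
    (Linv : H →ₗ[ℝ] H)
    (hL1 : L ∘ₗ Linv = LinearMap.id) (hL2 : Linv ∘ₗ L = LinearMap.id)
    (B : H →ₗ[ℝ] S) (hB : Function.Surjective B)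
    (T : S →ₗ[ℝ] S)
    (hT1 : T ∘ₗ (B ∘ₗ Linv ∘ₗ LinearMap.adjoint B) = LinearMap.id)
    (hT2 : (B ∘ₗ Linv ∘ₗ LinearMap.adjoint B) ∘ₗ T = LinearMap.id) :
    LinearMap.adjoint T = T ∧
    (∀ s : S, s ≠ 0 → (0 : ℝ) < inner ℝ (T s) s) ∧
    (∀ s : S, IsLeast {e : ℝ | ∃ v : H, B v = s ∧ e = inner ℝ (L v) v}
      (inner ℝ (T s) s)) :=
  stmt19_general L hLsa hLpos Linv hL1 B T hT2
end
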